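/- For all real numbers x > 0 and y > 0, the integral H_{1,2,1}(x,y) = ∫₀^∞ (u+1)^{-1}(ux+1)^{-2}(uy+1)^{-1} u^{5/2} du converges and equals π(2x^{3/2} + 4x(√y + 1) + 2√x(√y + 1)² + y + √y)/(2(√x + 1)² x^{3/2} (√y + 1) √y (√x + √y)²). -/

import Mathlib

open MeasureTheory Real

open Set Filter Topology

lemma pow_half_aux (s : ℝ) (hs : 0 ≤ s) (n : ℕ) : (s ^ 2 : ℝ) ^ ((n : ℝ) / 2) = s ^ n := by
  have h : (s ^ 2 : ℝ) ^ ((n : ℝ) / 2) = ((s ^ 2 : ℝ) ^ ((1 : ℝ) / 2)) ^ (n : ℕ) := by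
    rw [← Real.rpow_natCast ((s ^ 2 : ℝ) ^ ((1 : ℝ) / 2)) n, ← Real.rpow_mul (by positivity)]
    norm_num
    congr 1
    ring
  rw [h, ← Real.sqrt_eq_rpow, Real.sqrt_sq hs]

lemma tendsto_sqrt_atTop' : Tendsto Real.sqrt atTop atTop := by
  have : Real.sqrt = fun x : ℝ => x ^ ((1:ℝ)/2) := funext fun x => Real.sqrt_eq_rpow x
  rw [this]
  exact tendsto_rpow_atTop (by norm_num)

lemma tendsto_atan_sqrt (a : ℝ) (ha : 0 < a) :
    Tendsto (fun u : ℝ => Real.arctan (a * Real.sqrt u)) atTop (𝓝 (π/2)) := by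
  have h1 : Tendsto (fun u : ℝ => a * Real.sqrt u) atTop atTop :=
    tendsto_sqrt_atTop'.const_mul_atTop ha
  exact (Real.tendsto_arctan_atTop.mono_right nhdsWithin_le_nhds).comp h1

lemma tendsto_sqrt_div (a : ℝ) (ha : 0 < a) (k : ℕ) (hk : 1 ≤ k) :
    Tendsto (fun u : ℝ => Real.sqrt u / (a * u + 1) ^ k) atTop (𝓝 0) := by
  apply squeeze_zero' (g := fun u : ℝ => a⁻¹ * (Real.sqrt u)⁻¹)
  · filter_upwards [eventually_ge_atTop (0:ℝ)] with u hu
    have : (0:ℝ) ≤ a * u + 1 := by nlinarith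
    positivity
  · filter_upwards [eventually_gt_atTop (0:ℝ)] with u hu
    obtain ⟨s, hs0, rfl⟩ : ∃ s : ℝ, 0 < s ∧ s ^ 2 = u :=
      ⟨Real.sqrt u, Real.sqrt_pos.mpr hu, Real.sq_sqrt hu.le⟩
    rw [Real.sqrt_sq hs0.le]
    have h2 : a * s ^ 2 ≤ (a * s ^ 2 + 1) ^ k := by
      calc a * s ^ 2 ≤ a * s ^ 2 + 1 := by linarith
      _ ≤ (a * s ^ 2 + 1) ^ k := le_self_pow₀ (by nlinarith [sq_nonneg s]) (by omega)
    calc s / (a * s ^ 2 + 1) ^ k ≤ s / (a * s ^ 2) := by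
          apply div_le_div_of_nonneg_left hs0.le (mul_pos ha (pow_pos hs0 2)) h2
      _ = a⁻¹ * s⁻¹ := by field_simp
  · have := (tendsto_sqrt_atTop'.inv_tendsto_atTop).const_mul (a⁻¹)
    simpa using this

lemma hasDerivAt_atan_sqrt (a : ℝ) {u : ℝ} (hu : 0 < u) :
    HasDerivAt (fun v : ℝ => Real.arctan (a * Real.sqrt v))
      (a / (2 * Real.sqrt u * (a ^ 2 * u + 1))) u := by
  have hs : Real.sqrt u ≠ 0 := (Real.sqrt_pos.mpr hu).ne'
  have h2 : HasDerivAt (fun v : ℝ => a * Real.sqrt v) (a * (1 / (2 * Real.sqrt u))) u :=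
    (Real.hasDerivAt_sqrt hu.ne').const_mul a
  have h3 := (Real.hasDerivAt_arctan (a * Real.sqrt u)).comp u h2
  have h4 : HasDerivAt (fun v : ℝ => Real.arctan (a * Real.sqrt v))
      (1 / (1 + (a * Real.sqrt u) ^ 2) * (a * (1 / (2 * Real.sqrt u)))) u := by
    simpa [Function.comp_def] using h3
  convert h4 using 1
  have hss : Real.sqrt u ^ 2 = u := Real.sq_sqrt hu.le
  have hpos : (0:ℝ) < a ^ 2 * u + 1 := by nlinarith [sq_nonneg a]
  have hpos2 : (0:ℝ) < 1 + a ^ 2 * u := by linarith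
  rw [mul_pow, hss]
  rw [show 1 + a ^ 2 * u = a ^ 2 * u + 1 by ring]
  rw [div_eq_iff (by positivity), one_div, mul_comm]
  field_simp

lemma hasDerivAt_sqrt_div (a : ℝ) (ha : 0 < a) (k : ℕ) {u : ℝ} (hu : 0 < u) :
    HasDerivAt (fun v : ℝ => Real.sqrt v / (a * v + 1) ^ (k + 1))
      ((1 - (2 * (k : ℝ) + 1) * a * u) / (2 * Real.sqrt u * (a * u + 1) ^ (k + 2))) u := by
  have hau : 0 < a * u + 1 := by nlinarith
  have hlin : HasDerivAt (fun v : ℝ => a * v + 1) a u := by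
    simpa using ((hasDerivAt_id u).const_mul a).add_const 1
  have hden : HasDerivAt (fun v : ℝ => (a * v + 1) ^ (k + 1))
      (((k : ℝ) + 1) * (a * u + 1) ^ k * a) u := by
    have := hlin.pow (k + 1)
    norm_num at this
    exact this
  have h := (Real.hasDerivAt_sqrt hu.ne').div hden (pow_ne_zero _ hau.ne')
  refine h.congr_deriv ?_
  obtain ⟨s, hs0, rfl⟩ : ∃ s : ℝ, 0 < s ∧ s ^ 2 = u :=
    ⟨Real.sqrt u, Real.sqrt_pos.mpr hu, Real.sq_sqrt hu.le⟩
  rw [Real.sqrt_sq hs0.le]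
  have h1 : (0:ℝ) < a * s ^ 2 + 1 := by positivity
  field_simp
  ring

set_option maxHeartbeats 800000 in
lemma master (p q c1 c2 c3 c4 c5 c6 c7 c8 : ℝ) (hp : 0 < p) (hq : 0 < q)
    (hder : ∀ u : ℝ, 0 < u →
      c1 / (u + 1) + c2 * p / (p ^ 2 * u + 1) + c3 * q / (q ^ 2 * u + 1)
        + c4 * (1 - u) / (u + 1) ^ 2 + c5 * (1 - 3 * u) / (u + 1) ^ 3
        + c6 * (1 - 5 * u) / (u + 1) ^ 4
        + c7 * (1 - p ^ 2 * u) / (p ^ 2 * u + 1) ^ 2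
        + c8 * (1 - 3 * p ^ 2 * u) / (p ^ 2 * u + 1) ^ 3
      = 2 * u ^ 3 / ((u + 1) * (p ^ 2 * u + 1) ^ 2 * (q ^ 2 * u + 1))) :
    IntegrableOn
      (fun u : ℝ =>
        (u + 1)⁻¹ * (u * p ^ 2 + 1) ^ (-2 : ℤ) * (u * q ^ 2 + 1)⁻¹ * u ^ ((5 : ℝ) / 2))
      (Set.Ioi 0) ∧
    ∫ u in Set.Ioi (0 : ℝ),
        (u + 1)⁻¹ * (u * p ^ 2 + 1) ^ (-2 : ℤ) * (u * q ^ 2 + 1)⁻¹ * u ^ ((5 : ℝ) / 2)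
      = (c1 + c2 + c3) * (π / 2) := by
  set f : ℝ → ℝ := fun u =>
    (u + 1)⁻¹ * (u * p ^ 2 + 1) ^ (-2 : ℤ) * (u * q ^ 2 + 1)⁻¹ * u ^ ((5 : ℝ) / 2) with hf
  set F : ℝ → ℝ := fun u =>
    c1 * Real.arctan (1 * Real.sqrt u) + c2 * Real.arctan (p * Real.sqrt u)
      + c3 * Real.arctan (q * Real.sqrt u)
      + c4 * (Real.sqrt u / (1 * u + 1) ^ (0 + 1))
      + c5 * (Real.sqrt u / (1 * u + 1) ^ (1 + 1))
      + c6 * (Real.sqrt u / (1 * u + 1) ^ (2 + 1))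
      + c7 * (Real.sqrt u / (p ^ 2 * u + 1) ^ (0 + 1))
      + c8 * (Real.sqrt u / (p ^ 2 * u + 1) ^ (1 + 1)) with hF
  have hderiv : ∀ u ∈ Set.Ioi (0:ℝ), HasDerivAt F (f u) u := by
    intro u hu
    rw [Set.mem_Ioi] at hu
    have hD : HasDerivAt F
        (c1 * (1 / (2 * Real.sqrt u * (1 ^ 2 * u + 1)))
          + c2 * (p / (2 * Real.sqrt u * (p ^ 2 * u + 1)))
          + c3 * (q / (2 * Real.sqrt u * (q ^ 2 * u + 1)))
          + c4 * ((1 - (2 * ((0:ℕ) : ℝ) + 1) * 1 * u) / (2 * Real.sqrt u * (1 * u + 1) ^ (0 + 2)))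
          + c5 * ((1 - (2 * ((1:ℕ) : ℝ) + 1) * 1 * u) / (2 * Real.sqrt u * (1 * u + 1) ^ (1 + 2)))
          + c6 * ((1 - (2 * ((2:ℕ) : ℝ) + 1) * 1 * u) / (2 * Real.sqrt u * (1 * u + 1) ^ (2 + 2)))
          + c7 * ((1 - (2 * ((0:ℕ) : ℝ) + 1) * p ^ 2 * u)
              / (2 * Real.sqrt u * (p ^ 2 * u + 1) ^ (0 + 2)))
          + c8 * ((1 - (2 * ((1:ℕ) : ℝ) + 1) * p ^ 2 * u)
              / (2 * Real.sqrt u * (p ^ 2 * u + 1) ^ (1 + 2)))) u := by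
      have hp2 : (0:ℝ) < p ^ 2 := by positivity
      have h1' : (0:ℝ) < (1:ℝ) := one_pos
      refine HasDerivAt.add (HasDerivAt.add (HasDerivAt.add (HasDerivAt.add
        (HasDerivAt.add (HasDerivAt.add (HasDerivAt.add ?_ ?_) ?_) ?_) ?_) ?_) ?_) ?_
      · have h := hasDerivAt_atan_sqrt 1 hu
        exact (by simpa using h : HasDerivAt (fun v : ℝ => Real.arctan (1 * Real.sqrt v))
          (1 / (2 * Real.sqrt u * (1 ^ 2 * u + 1))) u).const_mul c1
      · exact (hasDerivAt_atan_sqrt p hu).const_mul c2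
      · exact (hasDerivAt_atan_sqrt q hu).const_mul c3
      · exact (hasDerivAt_sqrt_div 1 one_pos 0 hu).const_mul c4
      · exact (hasDerivAt_sqrt_div 1 one_pos 1 hu).const_mul c5
      · exact (hasDerivAt_sqrt_div 1 one_pos 2 hu).const_mul c6
      · exact (hasDerivAt_sqrt_div (p ^ 2) hp2 0 hu).const_mul c7
      · exact (hasDerivAt_sqrt_div (p ^ 2) hp2 1 hu).const_mul c8
    have key := hder u hu
    have heq : f u
        = (c1 * (1 / (2 * Real.sqrt u * (1 ^ 2 * u + 1)))
          + c2 * (p / (2 * Real.sqrt u * (p ^ 2 * u + 1)))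
          + c3 * (q / (2 * Real.sqrt u * (q ^ 2 * u + 1)))
          + c4 * ((1 - (2 * ((0:ℕ) : ℝ) + 1) * 1 * u) / (2 * Real.sqrt u * (1 * u + 1) ^ (0 + 2)))
          + c5 * ((1 - (2 * ((1:ℕ) : ℝ) + 1) * 1 * u) / (2 * Real.sqrt u * (1 * u + 1) ^ (1 + 2)))
          + c6 * ((1 - (2 * ((2:ℕ) : ℝ) + 1) * 1 * u) / (2 * Real.sqrt u * (1 * u + 1) ^ (2 + 2)))
          + c7 * ((1 - (2 * ((0:ℕ) : ℝ) + 1) * p ^ 2 * u)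
              / (2 * Real.sqrt u * (p ^ 2 * u + 1) ^ (0 + 2)))
          + c8 * ((1 - (2 * ((1:ℕ) : ℝ) + 1) * p ^ 2 * u)
              / (2 * Real.sqrt u * (p ^ 2 * u + 1) ^ (1 + 2)))) := by
      rw [hf]
      simp only
      obtain ⟨s, hs0, rfl⟩ : ∃ s : ℝ, 0 < s ∧ s ^ 2 = u :=
        ⟨Real.sqrt u, Real.sqrt_pos.mpr hu, Real.sq_sqrt hu.le⟩
      rw [Real.sqrt_sq hs0.le]
      have h52 : (s ^ 2 : ℝ) ^ ((5:ℝ)/2) = s ^ 5 := by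
        have := pow_half_aux s hs0.le 5
        norm_num at this
        exact this
      have hz : (s ^ 2 * p ^ 2 + 1 : ℝ) ^ (-2 : ℤ) = ((s ^ 2 * p ^ 2 + 1 : ℝ) ^ 2)⁻¹ := by
        rw [zpow_neg]
        norm_cast
      rw [h52, hz]
      have e1 : (0:ℝ) < s ^ 2 + 1 := by positivity
      have e2 : (0:ℝ) < p ^ 2 * s ^ 2 + 1 := by positivity
      have e3 : (0:ℝ) < q ^ 2 * s ^ 2 + 1 := by positivity
      have e2' : (0:ℝ) < s ^ 2 * p ^ 2 + 1 := by positivity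
      have e3' : (0:ℝ) < s ^ 2 * q ^ 2 + 1 := by positivity
      have key2 : c1 / (s ^ 2 + 1) + c2 * p / (p ^ 2 * s ^ 2 + 1) + c3 * q / (q ^ 2 * s ^ 2 + 1)
          + c4 * (1 - s ^ 2) / (s ^ 2 + 1) ^ 2 + c5 * (1 - 3 * s ^ 2) / (s ^ 2 + 1) ^ 3
          + c6 * (1 - 5 * s ^ 2) / (s ^ 2 + 1) ^ 4
          + c7 * (1 - p ^ 2 * s ^ 2) / (p ^ 2 * s ^ 2 + 1) ^ 2
          + c8 * (1 - 3 * p ^ 2 * s ^ 2) / (p ^ 2 * s ^ 2 + 1) ^ 3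
          = 2 * (s ^ 2) ^ 3 / ((s ^ 2 + 1) * (p ^ 2 * s ^ 2 + 1) ^ 2 * (q ^ 2 * s ^ 2 + 1)) :=
        key
      have goal2 : (s ^ 2 + 1)⁻¹ * ((s ^ 2 * p ^ 2 + 1) ^ 2)⁻¹ * (s ^ 2 * q ^ 2 + 1)⁻¹ * s ^ 5
          = (2 * s)⁻¹
            * (2 * (s ^ 2) ^ 3 / ((s ^ 2 + 1) * (p ^ 2 * s ^ 2 + 1) ^ 2 * (q ^ 2 * s ^ 2 + 1))) := by
        field_simp
      have hsne : s ≠ 0 := hs0.ne'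
      rw [goal2, ← key2]
      rw [mul_add, mul_add, mul_add, mul_add, mul_add, mul_add, mul_add]
      congr 1
      · congr 1
        · congr 1
          · congr 1
            · congr 1
              · congr 1
                · congr 1
                  · field_simp
                    try norm_num
                    try ring
                    try norm_num
                  · field_simp
                    try norm_num
                    try ring
                    try norm_num
                · field_simp
                  try norm_num
                  try ring
                  try norm_num
              · field_simp
                try norm_num
                try ring
                try norm_num
            · field_simp
              try norm_num
              try ring
              try norm_num
          · field_simp
            try norm_num
            try ring
            try norm_num
        · field_simp
          try norm_num
          try ring
          try norm_num
      · field_simp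
        try norm_num
        try ring
        try norm_num
    rw [heq]
    exact hD
  have hcont : ContinuousWithinAt F (Set.Ici 0) 0 := by
    apply ContinuousAt.continuousWithinAt
    have h1 : Continuous fun u : ℝ => Real.sqrt u := Real.continuous_sqrt
    have harc : ∀ a : ℝ, Continuous fun u : ℝ => Real.arctan (a * Real.sqrt u) :=
      fun a => Real.continuous_arctan.comp (continuous_const.mul h1)
    have hdiv : ∀ (a : ℝ) (k : ℕ), ContinuousAt (fun u : ℝ => Real.sqrt u / (a * u + 1) ^ k) 0 := by
      intro a k
      apply ContinuousAt.div h1.continuousAt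
        ((((continuous_const.mul continuous_id).add continuous_const).pow k).continuousAt)
      norm_num
    rw [hF]
    exact ((((((((continuous_const.mul (harc 1)).continuousAt.add
      (continuous_const.mul (harc p)).continuousAt).add
      (continuous_const.mul (harc q)).continuousAt).add
      ((hdiv 1 (0+1)).const_mul c4)).add ((hdiv 1 (1+1)).const_mul c5)).add
      ((hdiv 1 (2+1)).const_mul c6)).add
      ((hdiv (p^2) (0+1)).const_mul c7)).add ((hdiv (p^2) (1+1)).const_mul c8))
  have hF0 : F 0 = 0 := by
    rw [hF]
    norm_num
  have hnonneg : ∀ u ∈ Set.Ioi (0:ℝ), 0 ≤ f u := by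
    intro u hu
    rw [Set.mem_Ioi] at hu
    rw [hf]
    simp only
    have h1 : (0:ℝ) ≤ u + 1 := by linarith
    have h2 : (0:ℝ) ≤ u * p ^ 2 + 1 := by nlinarith [sq_nonneg p]
    have h3 : (0:ℝ) ≤ u * q ^ 2 + 1 := by nlinarith [sq_nonneg q]
    have h4 : (0:ℝ) ≤ u ^ ((5:ℝ)/2) := Real.rpow_nonneg hu.le _
    exact mul_nonneg (mul_nonneg (mul_nonneg (inv_nonneg.mpr h1) (zpow_nonneg h2 _))
      (inv_nonneg.mpr h3)) h4
  have htop : Tendsto F atTop (𝓝 ((c1 + c2 + c3) * (π / 2))) := by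
    have l1 := (tendsto_atan_sqrt 1 one_pos).const_mul c1
    have l2 := (tendsto_atan_sqrt p hp).const_mul c2
    have l3 := (tendsto_atan_sqrt q hq).const_mul c3
    have l4 := (tendsto_sqrt_div 1 one_pos (0+1) (by norm_num)).const_mul c4
    have l5 := (tendsto_sqrt_div 1 one_pos (1+1) (by norm_num)).const_mul c5
    have l6 := (tendsto_sqrt_div 1 one_pos (2+1) (by norm_num)).const_mul c6
    have l7 := (tendsto_sqrt_div (p^2) (by positivity) (0+1) (by norm_num)).const_mul c7
    have l8 := (tendsto_sqrt_div (p^2) (by positivity) (1+1) (by norm_num)).const_mul c8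
    have comb := ((((((l1.add l2).add l3).add l4).add l5).add l6).add l7).add l8
    rw [hF]
    convert comb using 2
    ring
  constructor
  · exact integrableOn_Ioi_deriv_of_nonneg hcont hderiv hnonneg htop
  · have hval := integral_Ioi_of_hasDerivAt_of_nonneg hcont hderiv hnonneg htop
    rw [hval, hF0, sub_zero]

lemma sq_ne_sq_aux {a b : ℝ} (ha : 0 < a) (hb : 0 < b) (h : a ≠ b) : a ^ 2 - b ^ 2 ≠ 0 := by
  intro h2
  rcases mul_eq_zero.mp (show (a - b) * (a + b) = 0 by linear_combination h2) with h3 | h3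
  · exact h (by linarith)
  · linarith

set_option maxHeartbeats 1600000 in
/-- For all reals `x, y > 0`, the integral
`H₁₂₁(x,y) = ∫₀^∞ (u+1)⁻¹ (ux+1)⁻² (uy+1)⁻¹ u^(5/2) du` converges and equals
`π(2x^(3/2) + 4x(√y+1) + 2√x(√y+1)² + y + √y) / (2(√x+1)²x^(3/2)(√y+1)√y(√x+√y)²)`. -/
theorem H_one_two_one_eval (x y : ℝ) (hx : 0 < x) (hy : 0 < y) :
    IntegrableOn
      (fun u : ℝ =>
        (u + 1)⁻¹ * (u * x + 1) ^ (-2 : ℤ) * (u * y + 1)⁻¹ * u ^ ((5 : ℝ) / 2))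
      (Set.Ioi 0) ∧
    ∫ u in Set.Ioi (0 : ℝ),
        (u + 1)⁻¹ * (u * x + 1) ^ (-2 : ℤ) * (u * y + 1)⁻¹ * u ^ ((5 : ℝ) / 2) =
      Real.pi * (2 * x ^ ((3 : ℝ) / 2) + 4 * x * (Real.sqrt y + 1) +
          2 * Real.sqrt x * (Real.sqrt y + 1) ^ 2 + y + Real.sqrt y) /
        (2 * (Real.sqrt x + 1) ^ 2 * x ^ ((3 : ℝ) / 2) * (Real.sqrt y + 1) *
          Real.sqrt y * (Real.sqrt x + Real.sqrt y) ^ 2) := by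
  have hp : 0 < Real.sqrt x := Real.sqrt_pos.mpr hx
  have hq : 0 < Real.sqrt y := Real.sqrt_pos.mpr hy
  have hx2 : Real.sqrt x ^ 2 = x := Real.sq_sqrt hx.le
  have hy2 : Real.sqrt y ^ 2 = y := Real.sq_sqrt hy.le
  set p := Real.sqrt x with hpd
  set q := Real.sqrt y with hqd
  have hx32 : x ^ ((3:ℝ)/2) = p ^ 3 := by
    rw [← hx2]
    have := pow_half_aux p hp.le 3
    norm_num at this
    exact this
  rw [hx32, ← hx2, ← hy2]
  have hpne : p ≠ 0 := hp.ne'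
  have hqne : q ≠ 0 := hq.ne'
  have hp1pos : (0:ℝ) < p + 1 := by linarith
  have hq1pos : (0:ℝ) < q + 1 := by linarith
  have hpqpos : (0:ℝ) < p + q := by linarith
  by_cases hp1 : p = 1
  · by_cases hq1 : q = 1
    · -- x = y = 1
      obtain ⟨hi, hv⟩ := master p q (5/8) 0 0 (-11/8) (13/12) (-1/3) 0 0 hp hq (by
        intro u hu
        have h0 : u + 1 ≠ 0 := ne_of_gt (by linarith)
        rw [hp1, hq1]
        field_simp
        ring)
      refine ⟨hi, hv.trans ?_⟩
      rw [hp1, hq1]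
      norm_num
      field_simp
      ring
    · -- x = 1, y ≠ 1
      have hB : q ^ 2 - 1 ≠ 0 := by
        simpa using sq_ne_sq_aux hq one_pos hq1
      obtain ⟨hi, hv⟩ := master p q
        (2*(q^4 - 3*q^2 + 3)/(q^2-1)^3 + (2*(3 - 2*q^2)/(q^2-1)^2 + 3*(2/(q^2-1))/4)/2)
        0 (-2/(q*(q^2-1)^3))
        ((2*(3 - 2*q^2)/(q^2-1)^2 + 3*(2/(q^2-1))/4)/2)
        (1/(2*(q^2-1))) 0 0 0 hp hq (by
        intro u hu
        have h0 : u + 1 ≠ 0 := ne_of_gt (by linarith)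
        have h3 : q^2*u + 1 ≠ 0 := by
          have := mul_nonneg (sq_nonneg q) hu.le
          exact ne_of_gt (by linarith)
        rw [hp1]
        field_simp
        ring)
      refine ⟨hi, hv.trans ?_⟩
      rw [hp1]
      field_simp
      ring
  · by_cases hq1 : q = 1
    · -- y = 1, x ≠ 1
      have hA : p ^ 2 - 1 ≠ 0 := by
        simpa using sq_ne_sq_aux hp one_pos hp1
      obtain ⟨hi, hv⟩ := master p q
        (2*(p^2-3)/(p^2-1)^3 + (-2/(p^2-1)^2)/2)
        ((2*(3*p^2-1)/(p^2*(p^2-1)^3) + (-2/(p^2*(p^2-1)^2))/2)/p)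
        0 ((-2/(p^2-1)^2)/2) 0 0 ((-2/(p^2*(p^2-1)^2))/2) 0 hp hq (by
        intro u hu
        have h0 : u + 1 ≠ 0 := ne_of_gt (by linarith)
        have h2 : p^2*u + 1 ≠ 0 := by
          have := mul_nonneg (sq_nonneg p) hu.le
          exact ne_of_gt (by linarith)
        rw [hq1]
        field_simp
        ring)
      refine ⟨hi, hv.trans ?_⟩
      rw [hq1]
      field_simp
      ring
    · by_cases hpq : p = q
      · -- x = y ≠ 1
        have hA : p ^ 2 - 1 ≠ 0 := by
          simpa using sq_ne_sq_aux hp one_pos hp1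
        obtain ⟨hi, hv⟩ := master p q
          (2/(p^2-1)^3)
          ((-2*(3*p^4-3*p^2+1)/(p^4*(p^2-1)^3)
            + (2*(3*p^2-2)/(p^4*(p^2-1)^2) + 3*(-2/(p^4*(p^2-1)))/4)/2)/p)
          0 0 0 0
          ((2*(3*p^2-2)/(p^4*(p^2-1)^2) + 3*(-2/(p^4*(p^2-1)))/4)/2)
          ((-2/(p^4*(p^2-1)))/4) hp hq (by
          intro u hu
          have h0 : u + 1 ≠ 0 := ne_of_gt (by linarith)
          have h2 : p^2*u + 1 ≠ 0 := by
            have := mul_nonneg (sq_nonneg p) hu.le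
            exact ne_of_gt (by linarith)
          rw [← hpq]
          field_simp
          ring)
        refine ⟨hi, hv.trans ?_⟩
        rw [← hpq]
        field_simp
        ring
      · -- generic
        have hA : p ^ 2 - 1 ≠ 0 := by
          simpa using sq_ne_sq_aux hp one_pos hp1
        have hB : q ^ 2 - 1 ≠ 0 := by
          simpa using sq_ne_sq_aux hq one_pos hq1
        have hC : p ^ 2 - q ^ 2 ≠ 0 := sq_ne_sq_aux hp hq hpq
        obtain ⟨hi, hv⟩ := master p q
          (2/((p^2-1)^2*(q^2-1)))
          ((2*(3*p^4 - 2*p^2*(1+q^2) + q^2)/(p^2*(p^2-1)^2*(p^2-q^2)^2)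
            + (-1)/(p^2*(p^2-1)*(p^2-q^2)))/p)
          (-2/(q*(q^2-1)*(p^2-q^2)^2))
          0 0 0
          ((-1)/(p^2*(p^2-1)*(p^2-q^2)))
          0 hp hq (by
          intro u hu
          have h0 : u + 1 ≠ 0 := ne_of_gt (by linarith)
          have h2 : p^2*u + 1 ≠ 0 := by
            have := mul_nonneg (sq_nonneg p) hu.le
            exact ne_of_gt (by linarith)
          have h3 : q^2*u + 1 ≠ 0 := by
            have := mul_nonneg (sq_nonneg q) hu.le
            exact ne_of_gt (by linarith)
          field_simp
          ring)
        refine ⟨hi, hv.trans ?_⟩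
        field_simp
        ring
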